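/- Let A and B be finite-dimensional k-algebras, M an A-B-bimodule and N a B-A-bimodule such that the regular A-A-bimodule A is isomorphic to a direct summand of M ⊗_B N. Then every simple left A-module is a homomorphic image of the left A-module M, and every simple right A-module is a homomorphic image of the right A-module N. -/

import Mathlib

/-!
The retraction `p : M ⊗_B N → A` of the summand is onto and `A`-linear on both sides. For a
nonzero `s` in a simple left `A`-module `S`, the map `x ↦ p x • s` is therefore a nonzero
`A`-linear map `M ⊗_B N → S`. Pure tensors generate `M ⊗_B N`, so it is nonzero on some `m ⊗ n`,
and then `m' ↦ m' ⊗ n ↦ S` is a nonzero map from `M` to a simple module, hence onto.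
For simple right modules, fix `m` instead and use `n' ↦ m ⊗ n'`.
-/

open scoped TensorProduct
open MulOpposite

universe u

namespace JJ

noncomputable section

section BalTensor

variable (B : Type u) [Ring B] (M : Type u) [AddCommGroup M] [Module Bᵐᵒᵖ M]
  (N : Type u) [AddCommGroup N] [Module B N]

/-- The subgroup of relations defining the balanced tensor product `M ⊗_B N`. -/
def balRel : Submodule ℤ (TensorProduct ℤ M N) :=
  Submodule.span ℤ { z | ∃ (b : B) (m : M) (n : N),
    z = (op b • m) ⊗ₜ[ℤ] n - m ⊗ₜ[ℤ] (b • n) }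

/-- The balanced tensor product `M ⊗_B N` of a right `B`-module `M` and a left `B`-module `N`. -/
def BalTensor : Type u := TensorProduct ℤ M N ⧸ balRel B M N

instance : AddCommGroup (BalTensor B M N) :=
  inferInstanceAs (AddCommGroup (TensorProduct ℤ M N ⧸ balRel B M N))

/-- The canonical projection onto the balanced tensor product. -/
def BalTensor.mk : TensorProduct ℤ M N →+ BalTensor B M N :=
  (balRel B M N).mkQ.toAddMonoidHom

/-- The image of a pure tensor in the balanced tensor product. -/
def BalTensor.tmul (m : M) (n : N) : BalTensor B M N := BalTensor.mk B M N (m ⊗ₜ n)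

lemma BalTensor.mk_surjective : Function.Surjective (BalTensor.mk B M N) :=
  Submodule.mkQ_surjective _

lemma BalTensor.balance (b : B) (m : M) (n : N) :
    BalTensor.tmul B M N (op b • m) n = BalTensor.tmul B M N m (b • n) := by
  have h : ((op b • m) ⊗ₜ[ℤ] n - m ⊗ₜ[ℤ] (b • n)) ∈ balRel B M N :=
    Submodule.subset_span ⟨b, m, n, rfl⟩
  have h2 := (Submodule.Quotient.mk_eq_zero (balRel B M N)).2 h
  rw [Submodule.Quotient.mk_sub] at h2
  exact sub_eq_zero.1 h2

end BalTensor

section LeftAction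

variable (B : Type u) [Ring B] (M : Type u) [AddCommGroup M] [Module Bᵐᵒᵖ M]
  (N : Type u) [AddCommGroup N] [Module B N]
  (A : Type u) [Ring A] [Module A M] [SMulCommClass A Bᵐᵒᵖ M]

/-- The left action of `a : A` on the plain tensor product. -/
def lActAux (a : A) : TensorProduct ℤ M N →ₗ[ℤ] TensorProduct ℤ M N :=
  LinearMap.rTensor N (DistribMulAction.toAddMonoidHom M a).toIntLinearMap

lemma lActAux_tmul (a : A) (m : M) (n : N) :
    lActAux M N A a (m ⊗ₜ n) = (a • m) ⊗ₜ n := by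
  rfl

lemma lActAux_rel (a : A) :
    balRel B M N ≤ (balRel B M N).comap (lActAux M N A a) := by
  rw [balRel, Submodule.span_le]
  rintro z ⟨b, m, n, rfl⟩
  simp only [SetLike.mem_coe, Submodule.mem_comap, map_sub, lActAux_tmul]
  rw [smul_comm a (op b) m]
  exact Submodule.subset_span ⟨b, a • m, n, rfl⟩

/-- The left action of `A` on the balanced tensor product. -/
def lAct (a : A) : BalTensor B M N →ₗ[ℤ] BalTensor B M N :=
  Submodule.mapQ _ _ (lActAux M N A a) (lActAux_rel B M N A a)

instance : SMul A (BalTensor B M N) := ⟨fun a x => lAct B M N A a x⟩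

lemma BalTensor.lsmul_mk (a : A) (x : TensorProduct ℤ M N) :
    a • (BalTensor.mk B M N x) = BalTensor.mk B M N (lActAux M N A a x) := rfl

lemma BalTensor.lsmul_tmul (a : A) (m : M) (n : N) :
    a • (BalTensor.tmul B M N m n) = BalTensor.tmul B M N (a • m) n := by
  rw [BalTensor.tmul, BalTensor.lsmul_mk, lActAux_tmul]
  rfl

instance BalTensor.instLeftModule : Module A (BalTensor B M N) where
  one_smul x := by
    obtain ⟨y, rfl⟩ := BalTensor.mk_surjective B M N x
    rw [BalTensor.lsmul_mk]
    congr 1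
    have h : lActAux M N A (1 : A) = LinearMap.id :=
      LinearMap.ext fun y => y.induction_on (by simp) (fun m n => by rw [lActAux_tmul, one_smul]; rfl) (fun x y hx hy => by simp only [map_add, hx, hy])
    rw [h]; rfl
  mul_smul a b x := by
    obtain ⟨y, rfl⟩ := BalTensor.mk_surjective B M N x
    rw [BalTensor.lsmul_mk, BalTensor.lsmul_mk, BalTensor.lsmul_mk]
    congr 1
    have h : lActAux M N A (a * b) = (lActAux M N A a).comp (lActAux M N A b) :=
      LinearMap.ext fun y => y.induction_on (by simp) (fun m n => by
        simp only [LinearMap.comp_apply, lActAux_tmul, mul_smul]) (fun x y hx hy => by simp only [map_add, hx, hy])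
    rw [h]; rfl
  smul_zero a := map_zero (lAct B M N A a)
  smul_add a x y := map_add (lAct B M N A a) x y
  add_smul a b x := by
    obtain ⟨y, rfl⟩ := BalTensor.mk_surjective B M N x
    rw [BalTensor.lsmul_mk, BalTensor.lsmul_mk, BalTensor.lsmul_mk, ← map_add]
    congr 1
    have h : lActAux M N A (a + b) = lActAux M N A a + lActAux M N A b :=
      LinearMap.ext fun y => y.induction_on (by simp) (fun m n => by
        simp only [LinearMap.add_apply, lActAux_tmul, add_smul, TensorProduct.add_tmul]) (fun x y hx hy => by simp only [map_add, hx, hy])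
    rw [h]; rfl
  zero_smul x := by
    obtain ⟨y, rfl⟩ := BalTensor.mk_surjective B M N x
    rw [BalTensor.lsmul_mk]
    have h : lActAux M N A (0 : A) = 0 :=
      LinearMap.ext fun y => y.induction_on (by simp) (fun m n => by
        simp only [lActAux_tmul, zero_smul, TensorProduct.zero_tmul, LinearMap.zero_apply]) (fun x y hx hy => by simp only [map_add, hx, hy])
    rw [h]
    simp

end LeftAction

section RightAction

variable (B : Type u) [Ring B] (M : Type u) [AddCommGroup M] [Module Bᵐᵒᵖ M]
  (N : Type u) [AddCommGroup N] [Module B N]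
  (C : Type u) [Ring C] [Module Cᵐᵒᵖ N] [SMulCommClass B Cᵐᵒᵖ N]

/-- The right action of `c : Cᵐᵒᵖ` on the plain tensor product. -/
def rActAux (c : Cᵐᵒᵖ) : TensorProduct ℤ M N →ₗ[ℤ] TensorProduct ℤ M N :=
  LinearMap.lTensor M (DistribMulAction.toAddMonoidHom N c).toIntLinearMap

lemma rActAux_tmul (c : Cᵐᵒᵖ) (m : M) (n : N) :
    rActAux M N C c (m ⊗ₜ n) = m ⊗ₜ (c • n) := by
  rfl

lemma rActAux_rel (c : Cᵐᵒᵖ) :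
    balRel B M N ≤ (balRel B M N).comap (rActAux M N C c) := by
  rw [balRel, Submodule.span_le]
  rintro z ⟨b, m, n, rfl⟩
  simp only [SetLike.mem_coe, Submodule.mem_comap, map_sub, rActAux_tmul]
  rw [← smul_comm b c n]
  exact Submodule.subset_span ⟨b, m, c • n, rfl⟩

/-- The right action of `Cᵐᵒᵖ` on the balanced tensor product. -/
def rAct (c : Cᵐᵒᵖ) : BalTensor B M N →ₗ[ℤ] BalTensor B M N :=
  Submodule.mapQ _ _ (rActAux M N C c) (rActAux_rel B M N C c)

instance : SMul Cᵐᵒᵖ (BalTensor B M N) := ⟨fun c x => rAct B M N C c x⟩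

lemma BalTensor.rsmul_mk (c : Cᵐᵒᵖ) (x : TensorProduct ℤ M N) :
    c • (BalTensor.mk B M N x) = BalTensor.mk B M N (rActAux M N C c x) := rfl

lemma BalTensor.rsmul_tmul (c : Cᵐᵒᵖ) (m : M) (n : N) :
    c • (BalTensor.tmul B M N m n) = BalTensor.tmul B M N m (c • n) := by
  rw [BalTensor.tmul, BalTensor.rsmul_mk, rActAux_tmul]
  rfl

instance BalTensor.instRightModule : Module Cᵐᵒᵖ (BalTensor B M N) where
  one_smul x := by
    obtain ⟨y, rfl⟩ := BalTensor.mk_surjective B M N x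
    rw [BalTensor.rsmul_mk]
    congr 1
    have h : rActAux M N C (1 : Cᵐᵒᵖ) = LinearMap.id :=
      LinearMap.ext fun y => y.induction_on (by simp) (fun m n => by rw [rActAux_tmul, one_smul]; rfl) (fun x y hx hy => by simp only [map_add, hx, hy])
    rw [h]; rfl
  mul_smul a b x := by
    obtain ⟨y, rfl⟩ := BalTensor.mk_surjective B M N x
    rw [BalTensor.rsmul_mk, BalTensor.rsmul_mk, BalTensor.rsmul_mk]
    congr 1
    have h : rActAux M N C (a * b) = (rActAux M N C a).comp (rActAux M N C b) :=
      LinearMap.ext fun y => y.induction_on (by simp) (fun m n => by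
        simp only [LinearMap.comp_apply, rActAux_tmul, mul_smul]) (fun x y hx hy => by simp only [map_add, hx, hy])
    rw [h]; rfl
  smul_zero c := map_zero (rAct B M N C c)
  smul_add c x y := map_add (rAct B M N C c) x y
  add_smul a b x := by
    obtain ⟨y, rfl⟩ := BalTensor.mk_surjective B M N x
    rw [BalTensor.rsmul_mk, BalTensor.rsmul_mk, BalTensor.rsmul_mk, ← map_add]
    congr 1
    have h : rActAux M N C (a + b) = rActAux M N C a + rActAux M N C b :=
      LinearMap.ext fun y => y.induction_on (by simp) (fun m n => by
        simp only [LinearMap.add_apply, rActAux_tmul, add_smul, TensorProduct.tmul_add]) (fun x y hx hy => by simp only [map_add, hx, hy])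
    rw [h]; rfl
  zero_smul x := by
    obtain ⟨y, rfl⟩ := BalTensor.mk_surjective B M N x
    rw [BalTensor.rsmul_mk]
    have h : rActAux M N C (0 : Cᵐᵒᵖ) = 0 :=
      LinearMap.ext fun y => y.induction_on (by simp) (fun m n => by
        simp only [rActAux_tmul, zero_smul, TensorProduct.tmul_zero, LinearMap.zero_apply]) (fun x y hx hy => by simp only [map_add, hx, hy])
    rw [h]
    simp

end RightAction

section Comm

variable (B : Type u) [Ring B] (M : Type u) [AddCommGroup M] [Module Bᵐᵒᵖ M]
  (N : Type u) [AddCommGroup N] [Module B N]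
  (A : Type u) [Ring A] [Module A M] [SMulCommClass A Bᵐᵒᵖ M]
  (C : Type u) [Ring C] [Module Cᵐᵒᵖ N] [SMulCommClass B Cᵐᵒᵖ N]

instance BalTensor.instSMulCommClass : SMulCommClass A Cᵐᵒᵖ (BalTensor B M N) := by
  constructor
  intro a c x
  obtain ⟨y, rfl⟩ := BalTensor.mk_surjective B M N x
  rw [BalTensor.rsmul_mk, BalTensor.lsmul_mk, BalTensor.lsmul_mk, BalTensor.rsmul_mk]
  congr 1
  have h : (lActAux M N A a).comp (rActAux M N C c)
      = (rActAux M N C c).comp (lActAux M N A a) :=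
    LinearMap.ext fun y => y.induction_on (by simp) (fun m n => by
      simp only [LinearMap.comp_apply, lActAux_tmul, rActAux_tmul]) (fun x y hx hy => by simp only [map_add, hx, hy])
  exact DFunLike.congr_fun h y

end Comm

section BimodHom

variable (A : Type u) [Ring A] (C : Type u) [Ring C]
variable (X : Type u) [AddCommGroup X] [Module A X] [Module Cᵐᵒᵖ X]
variable (Y : Type u) [AddCommGroup Y] [Module A Y] [Module Cᵐᵒᵖ Y]

/-- A map of `(A,C)`-bimodules: additive, left `A`-equivariant and right `C`-equivariant. -/
structure IsBimodHom (f : X → Y) : Prop where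
  map_add : ∀ x y, f (x + y) = f x + f y
  map_lsmul : ∀ (a : A) (x : X), f (a • x) = a • f x
  map_rsmul : ∀ (c : Cᵐᵒᵖ) (x : X), f (c • x) = c • f x

/-- `X` is (isomorphic to) a direct summand of `Y` as an `(A,C)`-bimodule,
i.e. a retract of `Y`. -/
def IsBimodSummand : Prop :=
  ∃ (i : X → Y) (p : Y → X), IsBimodHom A C X Y i ∧ IsBimodHom A C Y X p ∧ ∀ x, p (i x) = x

end BimodHom

section Jorder

variable (k : Type u) [Field k]

/-- A finite-dimensional `(A,B)`-bimodule over `k`, whose two induced `k`-actions agree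
with the given one. -/
structure BimodData (A B : Type u) [Ring A] [Ring B] [Algebra k A] [Algebra k B] :
    Type (u + 1) where
  X : Type u
  [acg : AddCommGroup X]
  [modk : Module k X]
  [modl : Module A X]
  [modr : Module Bᵐᵒᵖ X]
  [scc : SMulCommClass A Bᵐᵒᵖ X]
  [tl : IsScalarTower k A X]
  [tr : IsScalarTower k Bᵐᵒᵖ X]
  [fd : FiniteDimensional k X]

attribute [instance] BimodData.acg BimodData.modk BimodData.modl BimodData.modr BimodData.scc
  BimodData.tl BimodData.tr BimodData.fd

variable (A B : Type u) [Ring A] [Ring B] [Algebra k A] [Algebra k B]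

/-- `A ≥_J B`: there are finite-dimensional bimodules `M`, `N` such that the regular
`A`-`A`-bimodule `A` is a direct summand of `M ⊗_B N`. -/
def Jge : Prop :=
  ∃ (M : BimodData k A B) (N : BimodData k B A),
    IsBimodSummand A A A (BalTensor B M.X N.X)

/-- `A ≤_J B`. -/
def Jle : Prop := Jge k B A

/-- `A ∼_J B`: two-sided equivalence. -/
def Jequiv : Prop := Jge k A B ∧ Jge k B A

/-- `A >_J B`: strict two-sided inequality. -/
def Jgt : Prop := Jge k A B ∧ ¬ Jge k B A

end Jorder

section TensorGeneration

variable {B : Type u} [Ring B] {M : Type u} [AddCommGroup M] [Module Bᵐᵒᵖ M]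
  {N : Type u} [AddCommGroup N] [Module B N]

lemma BalTensor.addMonoidHom_ext {P : Type*} [AddCommGroup P] {g h : BalTensor B M N →+ P}
    (H : ∀ m n, g (BalTensor.tmul B M N m n) = h (BalTensor.tmul B M N m n)) : g = h := by
  have hmk : (g.comp (BalTensor.mk B M N)).toIntLinearMap
      = (h.comp (BalTensor.mk B M N)).toIntLinearMap :=
    TensorProduct.ext' H
  ext x
  obtain ⟨y, rfl⟩ := BalTensor.mk_surjective B M N x
  exact LinearMap.congr_fun hmk y

section Left

variable (A : Type u) [Ring A] [Module A M] [SMulCommClass A Bᵐᵒᵖ M]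

@[simps]
def BalTensor.tmulRight (n : N) : M →ₗ[A] BalTensor B M N where
  toFun m := BalTensor.tmul B M N m n
  map_add' m₁ m₂ := by simp only [BalTensor.tmul, TensorProduct.add_tmul, map_add]
  map_smul' a m := (BalTensor.lsmul_tmul B M N A a m n).symm

variable {A}

theorem BalTensor.exists_surjective_from_left_of_ne_zero {S : Type*} [AddCommGroup S]
    [Module A S] [IsSimpleModule A S] {g : BalTensor B M N →ₗ[A] S} (hg : g ≠ 0) :
    ∃ f : M →ₗ[A] S, Function.Surjective f := by
  obtain ⟨n, hn⟩ : ∃ n : N, g ∘ₗ BalTensor.tmulRight A n ≠ 0 := by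
    by_contra! h
    refine hg (LinearMap.toAddMonoidHom_injective (BalTensor.addMonoidHom_ext fun m n => ?_))
    simpa using LinearMap.congr_fun (h n) m
  exact ⟨_, LinearMap.surjective_of_ne_zero hn⟩

end Left

section Right

variable (C : Type u) [Ring C] [Module Cᵐᵒᵖ N] [SMulCommClass B Cᵐᵒᵖ N]

@[simps]
def BalTensor.tmulLeft (m : M) : N →ₗ[Cᵐᵒᵖ] BalTensor B M N where
  toFun n := BalTensor.tmul B M N m n
  map_add' n₁ n₂ := by simp only [BalTensor.tmul, TensorProduct.tmul_add, map_add]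
  map_smul' c n := (BalTensor.rsmul_tmul B M N C c m n).symm

variable {C}

theorem BalTensor.exists_surjective_from_right_of_ne_zero {S : Type*} [AddCommGroup S]
    [Module Cᵐᵒᵖ S] [IsSimpleModule Cᵐᵒᵖ S] {g : BalTensor B M N →ₗ[Cᵐᵒᵖ] S} (hg : g ≠ 0) :
    ∃ f : N →ₗ[Cᵐᵒᵖ] S, Function.Surjective f := by
  obtain ⟨m, hm⟩ : ∃ m : M, g ∘ₗ BalTensor.tmulLeft C m ≠ 0 := by
    by_contra! h
    refine hg (LinearMap.toAddMonoidHom_injective (BalTensor.addMonoidHom_ext fun m n => ?_))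
    simpa using LinearMap.congr_fun (h m) n
  exact ⟨_, LinearMap.surjective_of_ne_zero hm⟩

end Right

end TensorGeneration

namespace IsBimodHom

variable {A C X Y : Type u} [Ring A] [Ring C] [AddCommGroup X] [Module A X] [Module Cᵐᵒᵖ X]
  [AddCommGroup Y] [Module A Y] [Module Cᵐᵒᵖ Y] {f : X → Y}

def leftLinearMap (hf : IsBimodHom A C X Y f) : X →ₗ[A] Y where
  toFun := f
  map_add' := hf.map_add
  map_smul' := hf.map_lsmul

def rightLinearMap (hf : IsBimodHom A C X Y f) : X →ₗ[Cᵐᵒᵖ] Y where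
  toFun := f
  map_add' := hf.map_add
  map_smul' := hf.map_rsmul

end IsBimodHom

theorem exists_ne_zero_of_surjective_to_ring {R P S : Type*} [Ring R] [AddCommGroup P]
    [Module R P] [AddCommGroup S] [Module R S] [Nontrivial S] {p : P →ₗ[R] R}
    (hp : Function.Surjective p) : ∃ g : P →ₗ[R] S, g ≠ 0 := by
  obtain ⟨s, hs⟩ := exists_ne (0 : S)
  obtain ⟨x, hx⟩ := hp 1
  refine ⟨LinearMap.toSpanSingleton R S s ∘ₗ p, fun h => hs ?_⟩
  simpa [hx] using LinearMap.congr_fun h x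

theorem stmt3_general (A B M N : Type u)
    [Ring A]
    [Ring B]
    [AddCommGroup M] [Module A M] [Module Bᵐᵒᵖ M]
    [SMulCommClass A Bᵐᵒᵖ M]
    [AddCommGroup N] [Module B N] [Module Aᵐᵒᵖ N]
    [SMulCommClass B Aᵐᵒᵖ N]
    (h : IsBimodSummand A A A (BalTensor B M N)) :
    (∀ (S : Type u) [AddCommGroup S] [Module A S], IsSimpleModule A S →
      ∃ f : M →ₗ[A] S, Function.Surjective f) ∧
    (∀ (S : Type u) [AddCommGroup S] [Module Aᵐᵒᵖ S], IsSimpleModule Aᵐᵒᵖ S →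
      ∃ f : N →ₗ[Aᵐᵒᵖ] S, Function.Surjective f) := by
  obtain ⟨i, p, -, hp, hpi⟩ := h
  have hp_surj : Function.Surjective p := fun a => ⟨i a, hpi a⟩
  refine ⟨fun S _ _ hS => ?_, fun S _ _ hS => ?_⟩
  · have := hS.nontrivial
    obtain ⟨g, hg⟩ :=
      exists_ne_zero_of_surjective_to_ring (S := S) (p := hp.leftLinearMap) hp_surj
    exact BalTensor.exists_surjective_from_left_of_ne_zero hg
  · have := hS.nontrivial
    -- `op` identifies `A`, acted on by right multiplication, with the regular `Aᵐᵒᵖ`-module.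
    obtain ⟨g, hg⟩ := exists_ne_zero_of_surjective_to_ring (S := S)
      (p := (MulOpposite.opLinearEquiv Aᵐᵒᵖ).toLinearMap ∘ₗ hp.rightLinearMap)
      ((MulOpposite.opLinearEquiv Aᵐᵒᵖ).surjective.comp hp_surj)
    exact BalTensor.exists_surjective_from_right_of_ne_zero hg

/-- If the regular `A`-`A`-bimodule `A` is a direct summand of `M ⊗_B N`,
then every simple left `A`-module is a homomorphic image of the left `A`-module `M`, and
every simple right `A`-module is a homomorphic image of the right `A`-module `N`. -/
theorem stmt3 (k A B M N : Type u) [Field k]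
    [Ring A] [Algebra k A] [FiniteDimensional k A]
    [Ring B] [Algebra k B] [FiniteDimensional k B]
    [AddCommGroup M] [Module k M] [Module A M] [Module Bᵐᵒᵖ M]
    [SMulCommClass A Bᵐᵒᵖ M] [IsScalarTower k A M] [IsScalarTower k Bᵐᵒᵖ M]
    [FiniteDimensional k M]
    [AddCommGroup N] [Module k N] [Module B N] [Module Aᵐᵒᵖ N]
    [SMulCommClass B Aᵐᵒᵖ N] [IsScalarTower k B N] [IsScalarTower k Aᵐᵒᵖ N]
    [FiniteDimensional k N]
    (h : IsBimodSummand A A A (BalTensor B M N)) :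
    (∀ (S : Type u) [AddCommGroup S] [Module A S], IsSimpleModule A S →
      ∃ f : M →ₗ[A] S, Function.Surjective f) ∧
    (∀ (S : Type u) [AddCommGroup S] [Module Aᵐᵒᵖ S], IsSimpleModule Aᵐᵒᵖ S →
      ∃ f : N →ₗ[Aᵐᵒᵖ] S, Function.Surjective f) :=
  stmt3_general A B M N h

end

end JJ
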